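/- arXiv:math/0303357 — 4 statements merged into one kernel-verified Lean document; each statement's English description precedes it below -/
import Mathlib

section
/- Let B be a Hopf algebra over a field k, E a left B-comodule algebra with coaction ρ_E, M a left B-comodule, and γ : B → E a morphism of B-comodule algebras. Let E^{coB} = { e ∈ E : ρ_E(e) = 1 ⊗ e } be the subalgebra of coinvariants, and let E □^B M = ker(ρ_E ⊗ id_M − id_E ⊗ ρ_M) ⊆ E ⊗ M be the cotensor product. Then the map κ^γ(e ⊗ m) = ∑ e·γ(m₍₋₁₎) ⊗ m₍₀₎ restricted to E^{coB} ⊗ M has image exactly E □^B M. -/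
/-!
STATEMENT 2: `B` a Hopf algebra over a field `k`, `E` a `B`-comodule algebra with coaction
`ρE : E → E ⊗ B`, `M` a left `B`-comodule, `γ : B → E` a morphism of comodule algebras.
`E^{coB} = {e | ρE e = e ⊗ 1}` the coinvariant subalgebra, and
`E □^B M = ker(ρE ⊗ id − id ⊗ ρM)` the cotensor product inside `E ⊗ M`.
Then `κ^γ (e ⊗ m) = ∑ e·γ(m₍₋₁₎) ⊗ m₍₀₎` restricted to `E^{coB} ⊗ M` has image exactly
`E □^B M`.
-/

open TensorProduct Coalgebra HopfAlgebra LinearMap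

set_option maxHeartbeats 1000000
set_option synthInstance.maxHeartbeats 200000

/-- `κ_g (e ⊗ m) = e·g(m₍₋₁₎) ⊗ m₍₀₎`. -/
noncomputable def kappaMap {k : Type*} [Field k]
    {B E M : Type*} [Ring B] [Algebra k B] [Ring E] [Algebra k E]
    [AddCommGroup M] [Module k M]
    (ρM : M →ₗ[k] B ⊗[k] M) (g : B →ₗ[k] E) :
    E ⊗[k] M →ₗ[k] E ⊗[k] M :=
  (rTensor M (LinearMap.mul' k E)) ∘ₗ
    (TensorProduct.assoc k E E M).symm.toLinearMap ∘ₗ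
    (lTensor E (rTensor M g)) ∘ₗ (lTensor E ρM)


section AuxConv

variable {k : Type*} [Field k]
variable {B : Type*} [Ring B] [HopfAlgebra k B]
variable {A : Type*} [Ring A] [Algebra k A]

/-- convolution product on `Hom(B, A)` -/
noncomputable def convMul (f g : B →ₗ[k] A) : B →ₗ[k] A :=
  mul' k A ∘ₗ map f g ∘ₗ (comul : B →ₗ[k] B ⊗[k] B)

lemma convMul_apply (f g : B →ₗ[k] A) (b : B) :
    _root_.convMul f g b = mul' k A (map f g (comul b)) := rfl

lemma convMul_assoc (f g h : B →ₗ[k] A) :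
    _root_.convMul (_root_.convMul f g) h = _root_.convMul f (_root_.convMul g h) := by
  ext b
  have stepA : ∀ w : B ⊗[k] B,
      map (_root_.convMul f g) h w = map (mul' k A ∘ₗ map f g) h (rTensor B (comul : B →ₗ[k] B ⊗[k] B) w) := by
    intro w
    induction w using TensorProduct.induction_on with
    | zero => simp
    | tmul b₁ b₂ => simp [_root_.convMul_apply]
    | add x y hx hy => simp [hx, hy]
  have stepA' : ∀ w : B ⊗[k] B,
      map f (_root_.convMul g h) w = map f (mul' k A ∘ₗ map g h) (lTensor B (comul : B →ₗ[k] B ⊗[k] B) w) := by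
    intro w
    induction w using TensorProduct.induction_on with
    | zero => simp
    | tmul b₁ b₂ => simp [_root_.convMul_apply]
    | add x y hx hy => simp [hx, hy]
  have stepC : mul' k A ∘ₗ map (mul' k A ∘ₗ map f g) h
      = (mul' k A ∘ₗ map f (mul' k A ∘ₗ map g h)) ∘ₗ (TensorProduct.assoc k B B B).toLinearMap := by
    ext b₁ b₂ b₃
    simp [mul_assoc]
  rw [_root_.convMul_apply, _root_.convMul_apply, stepA, stepA']
  have := LinearMap.congr_fun stepC (rTensor B (comul : B →ₗ[k] B ⊗[k] B) (comul b))
  simp only [coe_comp, Function.comp_apply, LinearEquiv.coe_coe] at this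
  rw [this, coassoc_apply]

lemma convMul_counit_right (f : B →ₗ[k] A) :
    _root_.convMul f (Algebra.linearMap k A ∘ₗ (counit : B →ₗ[k] k)) = f := by
  ext b
  have step : ∀ w : B ⊗[k] B,
      mul' k A (map f (Algebra.linearMap k A ∘ₗ (counit : B →ₗ[k] k)) w)
        = f ((TensorProduct.rid k B) (lTensor B (counit : B →ₗ[k] k) w)) := by
    intro w
    induction w using TensorProduct.induction_on with
    | zero => simp
    | tmul b c =>
        simp only [map_tmul, lTensor_tmul, rid_tmul, map_smul, mul'_apply, coe_comp,
          Function.comp_apply, Algebra.linearMap_apply]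
        rw [Algebra.smul_def]
        exact (Algebra.commutes _ _).symm
    | add x y hx hy => simp [hx, hy]
  rw [_root_.convMul_apply, step, lTensor_counit_comul]
  simp

lemma convMul_counit_left (f : B →ₗ[k] A) :
    _root_.convMul (Algebra.linearMap k A ∘ₗ (counit : B →ₗ[k] k)) f = f := by
  ext b
  have step : ∀ w : B ⊗[k] B,
      mul' k A (map (Algebra.linearMap k A ∘ₗ (counit : B →ₗ[k] k)) f w)
        = f ((TensorProduct.lid k B) (rTensor B (counit : B →ₗ[k] k) w)) := by
    intro w
    induction w using TensorProduct.induction_on with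
    | zero => simp
    | tmul b c =>
        simp only [map_tmul, rTensor_tmul, lid_tmul, map_smul, mul'_apply, coe_comp,
          Function.comp_apply, Algebra.linearMap_apply]
        rw [Algebra.smul_def]
    | add x y hx hy => simp [hx, hy]
  rw [_root_.convMul_apply, step, rTensor_counit_comul]
  simp

lemma convMul_algHom (φ : B →ₐ[k] A) (p q : B →ₗ[k] B) :
    _root_.convMul (φ.toLinearMap ∘ₗ p) (φ.toLinearMap ∘ₗ q)
      = φ.toLinearMap ∘ₗ _root_.convMul p q := by
  ext b
  have step : ∀ w : B ⊗[k] B,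
      mul' k A (map (φ.toLinearMap ∘ₗ p) (φ.toLinearMap ∘ₗ q) w)
        = φ (mul' k B (map p q w)) := by
    intro w
    induction w using TensorProduct.induction_on with
    | zero => simp
    | tmul b₁ b₂ => simp
    | add x y hx hy => simp [hx, hy]
  simp [_root_.convMul_apply, step]

lemma convMul_antipode_right (φ : B →ₐ[k] A) :
    _root_.convMul φ.toLinearMap (φ.toLinearMap ∘ₗ (antipode k : B →ₗ[k] B))
      = Algebra.linearMap k A ∘ₗ (counit : B →ₗ[k] k) := by
  have h := _root_.convMul_algHom φ LinearMap.id (antipode k : B →ₗ[k] B)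
  rw [LinearMap.comp_id] at h
  rw [h]
  have h2 : _root_.convMul (LinearMap.id : B →ₗ[k] B) (antipode k : B →ₗ[k] B)
      = Algebra.linearMap k B ∘ₗ (counit : B →ₗ[k] k) := by
    ext b
    have : map (LinearMap.id : B →ₗ[k] B) (antipode k : B →ₗ[k] B) = lTensor B (antipode k) := rfl
    rw [_root_.convMul_apply, this, mul_antipode_lTensor_comul_apply]
    simp
  rw [h2]
  ext b
  simp

lemma convMul_antipode_left (φ : B →ₐ[k] A) :
    _root_.convMul (φ.toLinearMap ∘ₗ (antipode k : B →ₗ[k] B)) φ.toLinearMap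
      = Algebra.linearMap k A ∘ₗ (counit : B →ₗ[k] k) := by
  have h := _root_.convMul_algHom φ (antipode k : B →ₗ[k] B) LinearMap.id
  rw [LinearMap.comp_id] at h
  rw [h]
  have h2 : _root_.convMul (antipode k : B →ₗ[k] B) (LinearMap.id : B →ₗ[k] B)
      = Algebra.linearMap k B ∘ₗ (counit : B →ₗ[k] k) := by
    ext b
    have : map (antipode k : B →ₗ[k] B) (LinearMap.id : B →ₗ[k] B) = rTensor B (antipode k) := rfl
    rw [_root_.convMul_apply, this, mul_antipode_rTensor_comul_apply]
    simp
  rw [h2]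
  ext b
  simp

end AuxConv

section AuxMain
variable {k : Type*} [Field k]
variable {B : Type*} [Ring B] [HopfAlgebra k B]
variable {E : Type*} [Ring E] [Algebra k E]
variable {M : Type*} [AddCommGroup M] [Module k M]


lemma kappa_tmul (ρM : M →ₗ[k] B ⊗[k] M) (h : B →ₗ[k] E) (e : E) (m : M) :
    kappaMap ρM h (e ⊗ₜ m) = rTensor M ((LinearMap.mulLeft k e) ∘ₗ h) (ρM m) := by
  have key : ∀ t : B ⊗[k] M,
      rTensor M (LinearMap.mul' k E) ((TensorProduct.assoc k E E M).symm
        (e ⊗ₜ (rTensor M h t))) = rTensor M ((LinearMap.mulLeft k e) ∘ₗ h) t := by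
    intro t
    induction t using TensorProduct.induction_on with
    | zero => simp
    | tmul b m' => simp
    | add x y hx hy => simp [tmul_add, hx, hy]
  simp only [kappaMap, coe_comp, Function.comp_apply, lTensor_tmul, LinearEquiv.coe_coe]
  exact key (ρM m)


lemma kappa_inv (ρM : M →ₗ[k] B ⊗[k] M)
    (hMcounit : (TensorProduct.lid k M).toLinearMap ∘ₗ
        (rTensor M (counit : B →ₗ[k] k)) ∘ₗ ρM = LinearMap.id)
    (hMcoassoc : (TensorProduct.assoc k B B M).toLinearMap ∘ₗ
        (rTensor M (comul : B →ₗ[k] B ⊗[k] B)) ∘ₗ ρM = (lTensor B ρM) ∘ₗ ρM)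
    (γ : B →ₐ[k] E) (x : E ⊗[k] M) :
    kappaMap ρM γ.toLinearMap
      (kappaMap ρM (γ.toLinearMap ∘ₗ (antipode k : B →ₗ[k] B)) x) = x := by
  induction x using TensorProduct.induction_on with
  | zero => simp
  | add x y hx hy => simp [hx, hy]
  | tmul e m =>
    rw [kappa_tmul]
    set Φe : B ⊗[k] (B ⊗[k] M) →ₗ[k] E ⊗[k] M :=
      rTensor M ((LinearMap.mulLeft k e) ∘ₗ (LinearMap.mul' k E) ∘ₗ
        map (γ.toLinearMap ∘ₗ (antipode k : B →ₗ[k] B)) γ.toLinearMap) ∘ₗ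
        (TensorProduct.assoc k B B M).symm.toLinearMap
      with hΦe
    have claim1 : ∀ uu : B ⊗[k] M,
        kappaMap ρM γ.toLinearMap
          (rTensor M ((LinearMap.mulLeft k e) ∘ₗ
            (γ.toLinearMap ∘ₗ (antipode k : B →ₗ[k] B))) uu)
          = Φe (lTensor B ρM uu) := by
      intro uu
      induction uu using TensorProduct.induction_on with
      | zero => simp
      | add x y hx hy => simp only [map_add, tmul_add, hx, hy]
      | tmul b m' =>
        rw [rTensor_tmul, lTensor_tmul]
        rw [show ((LinearMap.mulLeft k e) ∘ₗ
            (γ.toLinearMap ∘ₗ (antipode k : B →ₗ[k] B))) b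
            = e * γ (antipode (R := k) b) from rfl]
        rw [kappa_tmul]
        have sub : ∀ s : B ⊗[k] M,
            rTensor M ((LinearMap.mulLeft k (e * γ (antipode (R := k) b)))
              ∘ₗ γ.toLinearMap) s = Φe (b ⊗ₜ s) := by
          intro s
          induction s using TensorProduct.induction_on with
          | zero => simp
          | add x y hx hy => simp only [map_add, tmul_add, hx, hy]
          | tmul b' m'' => simp [hΦe, mul_assoc]
        exact sub (ρM m')
    rw [claim1]
    have hco := LinearMap.congr_fun hMcoassoc m
    simp only [coe_comp, Function.comp_apply, LinearEquiv.coe_coe] at hco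
    rw [← hco]
    have claim2 : ∀ uu : B ⊗[k] M,
        Φe ((TensorProduct.assoc k B B M)
            (rTensor M (comul : B →ₗ[k] B ⊗[k] B) uu))
          = rTensor M ((LinearMap.mulLeft k e) ∘ₗ (Algebra.linearMap k E) ∘ₗ
              (counit : B →ₗ[k] k)) uu := by
      intro uu
      induction uu using TensorProduct.induction_on with
      | zero => simp
      | add x y hx hy => simp only [map_add, hx, hy]
      | tmul b m' =>
        rw [rTensor_tmul]
        have sub : ∀ w : B ⊗[k] B,
            Φe ((TensorProduct.assoc k B B M) (w ⊗ₜ m'))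
              = (e * γ (LinearMap.mul' k B
                  (rTensor B (antipode k : B →ₗ[k] B) w))) ⊗ₜ m' := by
          intro w
          induction w using TensorProduct.induction_on with
          | zero => simp
          | add x y hx hy =>
              simp only [add_tmul, map_add, hx, hy, mul_add]
          | tmul b₁ b₂ => simp [hΦe, mul_assoc]
        rw [sub (comul b), mul_antipode_rTensor_comul_apply, AlgHom.commutes]
        simp
    rw [claim2]
    have claim3 : ∀ uu : B ⊗[k] M,
        rTensor M ((LinearMap.mulLeft k e) ∘ₗ (Algebra.linearMap k E) ∘ₗ
            (counit : B →ₗ[k] k)) uu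
          = (TensorProduct.mk k E M e) ((TensorProduct.lid k M)
              (rTensor M (counit : B →ₗ[k] k) uu)) := by
      intro uu
      induction uu using TensorProduct.induction_on with
      | zero => simp
      | add x y hx hy => simp only [map_add, hx, hy]
      | tmul b m' =>
        simp only [rTensor_tmul, coe_comp, Function.comp_apply, Algebra.linearMap_apply,
          mulLeft_apply, lid_tmul, mk_apply]
        rw [← Algebra.commutes, ← Algebra.smul_def, smul_tmul]
    rw [claim3]
    have hcu := LinearMap.congr_fun hMcounit m
    simp only [coe_comp, Function.comp_apply, LinearEquiv.coe_coe, id_coe, id_eq] at hcu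
    rw [hcu]
    rfl


lemma forward_vanish (ρM : M →ₗ[k] B ⊗[k] M)
    (hMcoassoc : (TensorProduct.assoc k B B M).toLinearMap ∘ₗ
        (rTensor M (comul : B →ₗ[k] B ⊗[k] B)) ∘ₗ ρM = (lTensor B ρM) ∘ₗ ρM)
    (ρE : E →ₐ[k] E ⊗[k] B) (γ : B →ₐ[k] E)
    (hγ : ρE.toLinearMap ∘ₗ γ.toLinearMap
        = (TensorProduct.map γ.toLinearMap LinearMap.id) ∘ₗ (comul : B →ₗ[k] B ⊗[k] B))
    (c : E) (hc : ρE c = c ⊗ₜ[k] (1 : B)) (m : M) :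
    (((TensorProduct.assoc k E B M).toLinearMap ∘ₗ rTensor M ρE.toLinearMap)
        - lTensor E ρM) (kappaMap ρM γ.toLinearMap (c ⊗ₜ m)) = 0 := by
  rw [kappa_tmul]
  set Auxc : B ⊗[k] (B ⊗[k] M) →ₗ[k] E ⊗[k] (B ⊗[k] M) :=
    rTensor (B ⊗[k] M) ((LinearMap.mulLeft k c) ∘ₗ γ.toLinearMap) with hAuxc
  have claimP : ∀ uu : B ⊗[k] M,
      (TensorProduct.assoc k E B M) (rTensor M ρE.toLinearMap
        (rTensor M ((LinearMap.mulLeft k c) ∘ₗ γ.toLinearMap) uu))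
      = Auxc ((TensorProduct.assoc k B B M)
          (rTensor M (comul : B →ₗ[k] B ⊗[k] B) uu)) := by
    intro uu
    induction uu using TensorProduct.induction_on with
    | zero => simp
    | add x y hx hy => simp only [map_add, hx, hy]
    | tmul b m' =>
      simp only [rTensor_tmul, coe_comp, Function.comp_apply, mulLeft_apply,
        AlgHom.toLinearMap_apply]
      have hmul : ρE (c * γ b)
          = (c ⊗ₜ[k] (1 : B)) * (map γ.toLinearMap LinearMap.id (comul b)) := by
        rw [map_mul, hc]
        congr 1
        exact LinearMap.congr_fun hγ b
      rw [hmul]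
      have sub : ∀ w : B ⊗[k] B,
          (TensorProduct.assoc k E B M)
            (((c ⊗ₜ[k] (1 : B)) * (map γ.toLinearMap LinearMap.id w)) ⊗ₜ m')
          = Auxc ((TensorProduct.assoc k B B M) (w ⊗ₜ m')) := by
        intro w
        induction w using TensorProduct.induction_on with
        | zero => simp
        | add x y hx hy =>
            simp only [map_add, mul_add, add_tmul, map_add, hx, hy]
        | tmul b₁ b₂ =>
            simp [hAuxc, Algebra.TensorProduct.tmul_mul_tmul]
      exact sub (comul b)
  have claimL : ∀ uu : B ⊗[k] M,
      lTensor E ρM (rTensor M ((LinearMap.mulLeft k c) ∘ₗ γ.toLinearMap) uu)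
        = Auxc (lTensor B ρM uu) := by
    intro uu
    induction uu using TensorProduct.induction_on with
    | zero => simp
    | add x y hx hy => simp only [map_add, hx, hy]
    | tmul b m' => simp [hAuxc]
  have hco := LinearMap.congr_fun hMcoassoc m
  simp only [coe_comp, Function.comp_apply, LinearEquiv.coe_coe] at hco
  simp only [LinearMap.sub_apply, coe_comp, Function.comp_apply, LinearEquiv.coe_coe]
  rw [claimP (ρM m), claimL (ρM m), hco, sub_self]



lemma conv_t_phi (ρE : E →ₐ[k] E ⊗[k] B) (γ : B →ₐ[k] E)
    (hγ : ρE.toLinearMap ∘ₗ γ.toLinearMap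
        = (TensorProduct.map γ.toLinearMap LinearMap.id) ∘ₗ (comul : B →ₗ[k] B ⊗[k] B)) :
    _root_.convMul (((TensorProduct.mk k E B).flip 1) ∘ₗ γ.toLinearMap ∘ₗ (antipode k : B →ₗ[k] B))
      (ρE.toLinearMap ∘ₗ γ.toLinearMap) = TensorProduct.mk k E B 1 := by
  set tmap : B →ₗ[k] E ⊗[k] B :=
    ((TensorProduct.mk k E B).flip 1) ∘ₗ γ.toLinearMap ∘ₗ (antipode k : B →ₗ[k] B) with htmap
  ext b
  rw [_root_.convMul_apply]
  have step1 : ∀ w : B ⊗[k] B,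
      map tmap (ρE.toLinearMap ∘ₗ γ.toLinearMap) w
        = map tmap (map γ.toLinearMap LinearMap.id)
            (lTensor B (comul : B →ₗ[k] B ⊗[k] B) w) := by
    intro w
    induction w using TensorProduct.induction_on with
    | zero => simp
    | add x y hx hy => simp only [map_add, hx, hy]
    | tmul b₁ b₂ =>
        simp only [map_tmul, lTensor_tmul]
        congr 1
        exact LinearMap.congr_fun hγ b₂
  rw [step1, ← coassoc_apply b]
  have step2 : ∀ w : (B ⊗[k] B) ⊗[k] B,
      mul' k (E ⊗[k] B) (map tmap (map γ.toLinearMap LinearMap.id)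
          ((TensorProduct.assoc k B B B) w))
        = map γ.toLinearMap LinearMap.id
            (rTensor B ((mul' k B) ∘ₗ rTensor B (antipode k : B →ₗ[k] B)) w) := by
    intro w
    induction w using TensorProduct.induction_on with
    | zero => simp
    | add x y hx hy => simp only [map_add, hx, hy]
    | tmul s b₃ =>
        induction s using TensorProduct.induction_on with
        | zero => simp
        | add x y hx hy => simp only [add_tmul, map_add, hx, hy]
        | tmul b₁ b₂ =>
            simp [htmap, Algebra.TensorProduct.tmul_mul_tmul, map_mul]
  rw [step2]
  have step3 : ∀ w : B ⊗[k] B,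
      rTensor B ((mul' k B) ∘ₗ rTensor B (antipode k : B →ₗ[k] B))
          (rTensor B (comul : B →ₗ[k] B ⊗[k] B) w)
        = rTensor B ((Algebra.linearMap k B) ∘ₗ (counit : B →ₗ[k] k)) w := by
    intro w
    induction w using TensorProduct.induction_on with
    | zero => simp
    | add x y hx hy => simp only [map_add, hx, hy]
    | tmul b₁ b₂ =>
        simp only [rTensor_tmul, coe_comp, Function.comp_apply,
          mul_antipode_rTensor_comul_apply, Algebra.linearMap_apply]
  rw [step3]
  have step4 : ∀ w : B ⊗[k] B,
      map γ.toLinearMap LinearMap.id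
          (rTensor B ((Algebra.linearMap k B) ∘ₗ (counit : B →ₗ[k] k)) w)
        = (TensorProduct.mk k E B 1) ((TensorProduct.lid k B)
            (rTensor B (counit : B →ₗ[k] k) w)) := by
    intro w
    induction w using TensorProduct.induction_on with
    | zero => simp
    | add x y hx hy => simp only [map_add, hx, hy]
    | tmul b₁ b₂ =>
        simp only [rTensor_tmul, coe_comp, Function.comp_apply, Algebra.linearMap_apply,
          map_tmul, AlgHom.toLinearMap_apply, AlgHom.commutes, id_coe, id_eq,
          lid_tmul, mk_apply]
        rw [Algebra.algebraMap_eq_smul_one, smul_tmul, tmul_smul]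
  rw [step4, rTensor_counit_comul]
  simp

lemma conv_u_nu (ρE : E →ₐ[k] E ⊗[k] B) (γ : B →ₐ[k] E)
    (hγ : ρE.toLinearMap ∘ₗ γ.toLinearMap
        = (TensorProduct.map γ.toLinearMap LinearMap.id) ∘ₗ (comul : B →ₗ[k] B ⊗[k] B)) :
    _root_.convMul (TensorProduct.mk k E B 1)
        ((ρE.toLinearMap ∘ₗ γ.toLinearMap) ∘ₗ (antipode k : B →ₗ[k] B))
      = ((TensorProduct.mk k E B).flip 1) ∘ₗ γ.toLinearMap ∘ₗ (antipode k : B →ₗ[k] B) := by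
  have h1 := conv_t_phi ρE γ hγ
  have h2 : _root_.convMul (ρE.toLinearMap ∘ₗ γ.toLinearMap)
      ((ρE.toLinearMap ∘ₗ γ.toLinearMap) ∘ₗ (antipode k : B →ₗ[k] B))
      = Algebra.linearMap k (E ⊗[k] B) ∘ₗ (counit : B →ₗ[k] k) := by
    have h := _root_.convMul_antipode_right (ρE.comp γ)
    rw [AlgHom.comp_toLinearMap] at h
    exact h
  rw [← h1, _root_.convMul_assoc, h2, _root_.convMul_counit_right]

lemma key_psi (ρE : E →ₐ[k] E ⊗[k] B)
    (hEcoassoc : (TensorProduct.assoc k E B B).toLinearMap ∘ₗ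
        (rTensor B ρE.toLinearMap) ∘ₗ ρE.toLinearMap
        = (lTensor E (comul : B →ₗ[k] B ⊗[k] B)) ∘ₗ ρE.toLinearMap)
    (γ : B →ₐ[k] E)
    (hγ : ρE.toLinearMap ∘ₗ γ.toLinearMap
        = (TensorProduct.map γ.toLinearMap LinearMap.id) ∘ₗ (comul : B →ₗ[k] B ⊗[k] B)) :
    (mul' k (E ⊗[k] B)) ∘ₗ
      map ρE.toLinearMap ((ρE.toLinearMap ∘ₗ γ.toLinearMap) ∘ₗ (antipode k : B →ₗ[k] B)) ∘ₗ
      ρE.toLinearMap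
    = ((TensorProduct.mk k E B).flip 1) ∘ₗ (mul' k E) ∘ₗ
        lTensor E (γ.toLinearMap ∘ₗ (antipode k : B →ₗ[k] B)) ∘ₗ ρE.toLinearMap := by
  set ν : B →ₗ[k] E ⊗[k] B :=
    (ρE.toLinearMap ∘ₗ γ.toLinearMap) ∘ₗ (antipode k : B →ₗ[k] B) with hν
  set u : B →ₗ[k] E ⊗[k] B := TensorProduct.mk k E B 1 with hu
  ext e
  simp only [coe_comp, Function.comp_apply, AlgHom.toLinearMap_apply]
  have c1 : ∀ v : E ⊗[k] B,
      map ρE.toLinearMap ν v = lTensor (E ⊗[k] B) ν (rTensor B ρE.toLinearMap v) := by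
    intro v
    induction v using TensorProduct.induction_on with
    | zero => simp
    | add x y hx hy => simp only [map_add, hx, hy]
    | tmul e' b => simp
  have c2 : rTensor B ρE.toLinearMap (ρE e)
      = (TensorProduct.assoc k E B B).symm (lTensor E (comul : B →ₗ[k] B ⊗[k] B) (ρE e)) := by
    have h := LinearMap.congr_fun hEcoassoc e
    simp only [coe_comp, Function.comp_apply, LinearEquiv.coe_coe, AlgHom.toLinearMap_apply] at h
    rw [← h, LinearEquiv.symm_apply_apply]
  have c3 : ∀ w : E ⊗[k] (B ⊗[k] B),
      mul' k (E ⊗[k] B) (lTensor (E ⊗[k] B) ν ((TensorProduct.assoc k E B B).symm w))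
        = mul' k (E ⊗[k] B) (rTensor (E ⊗[k] B) ((TensorProduct.mk k E B).flip 1)
            (lTensor E ((mul' k (E ⊗[k] B)) ∘ₗ map u ν) w)) := by
    intro w
    induction w using TensorProduct.induction_on with
    | zero => simp
    | add x y hx hy => simp only [map_add, hx, hy]
    | tmul e' s =>
        induction s using TensorProduct.induction_on with
        | zero => simp
        | add x y hx hy => simp only [map_add, tmul_add, hx, hy]
        | tmul b₁ b₂ =>
            simp only [assoc_symm_tmul, lTensor_tmul, mul'_apply, rTensor_tmul,
              map_tmul, coe_comp, Function.comp_apply, flip_apply, mk_apply]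
            have h9 : (e' ⊗ₜ[k] (1 : B)) * u b₁ = e' ⊗ₜ[k] b₁ := by
              simp [hu, Algebra.TensorProduct.tmul_mul_tmul]
            rw [← mul_assoc, h9]
  have c4 : lTensor E ((mul' k (E ⊗[k] B)) ∘ₗ map u ν)
        (lTensor E (comul : B →ₗ[k] B ⊗[k] B) (ρE e))
      = lTensor E (_root_.convMul u ν) (ρE e) := by
    rw [← lTensor_comp_apply]
    congr 1
  rw [c1, c2, c3, c4, conv_u_nu ρE γ hγ]
  have c6 : ∀ v : E ⊗[k] B,
      mul' k (E ⊗[k] B) (rTensor (E ⊗[k] B) ((TensorProduct.mk k E B).flip 1)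
          (lTensor E (((TensorProduct.mk k E B).flip 1) ∘ₗ γ.toLinearMap ∘ₗ
            (antipode k : B →ₗ[k] B)) v))
        = ((TensorProduct.mk k E B).flip 1)
            (mul' k E (lTensor E (γ.toLinearMap ∘ₗ (antipode k : B →ₗ[k] B)) v)) := by
    intro v
    induction v using TensorProduct.induction_on with
    | zero => simp
    | add x y hx hy => simp only [map_add, hx, hy]
    | tmul e' b =>
        simp [Algebra.TensorProduct.tmul_mul_tmul]
  rw [c6]


lemma backward_mem (ρM : M →ₗ[k] B ⊗[k] M)
    (ρE : E →ₐ[k] E ⊗[k] B)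
    (hEcoassoc : (TensorProduct.assoc k E B B).toLinearMap ∘ₗ
        (rTensor B ρE.toLinearMap) ∘ₗ ρE.toLinearMap
        = (lTensor E (comul : B →ₗ[k] B ⊗[k] B)) ∘ₗ ρE.toLinearMap)
    (γ : B →ₐ[k] E)
    (hγ : ρE.toLinearMap ∘ₗ γ.toLinearMap
        = (TensorProduct.map γ.toLinearMap LinearMap.id) ∘ₗ (comul : B →ₗ[k] B ⊗[k] B))
    (x : E ⊗[k] M)
    (hx : (TensorProduct.assoc k E B M)
        (rTensor M ρE.toLinearMap x) = lTensor E ρM x) :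
    rTensor M (ρE.toLinearMap - (TensorProduct.mk k E B).flip 1)
      (kappaMap ρM (γ.toLinearMap ∘ₗ (antipode k : B →ₗ[k] B)) x) = 0 := by
  set ν : B →ₗ[k] E ⊗[k] B :=
    (ρE.toLinearMap ∘ₗ γ.toLinearMap) ∘ₗ (antipode k : B →ₗ[k] B) with hν
  set ins1 : E →ₗ[k] E ⊗[k] B := (TensorProduct.mk k E B).flip 1 with hins1
  set gS : B →ₗ[k] E := γ.toLinearMap ∘ₗ (antipode k : B →ₗ[k] B) with hgS
  set Λ : E ⊗[k] (B ⊗[k] M) →ₗ[k] E ⊗[k] (B ⊗[k] M) :=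
    (TensorProduct.assoc k E B M).toLinearMap ∘ₗ
      rTensor M ((mul' k (E ⊗[k] B)) ∘ₗ map ρE.toLinearMap ν) ∘ₗ
      (TensorProduct.assoc k E B M).symm.toLinearMap with hΛ
  set Λ₀ : E ⊗[k] (B ⊗[k] M) →ₗ[k] E ⊗[k] (B ⊗[k] M) :=
    (TensorProduct.assoc k E B M).toLinearMap ∘ₗ
      rTensor M (ins1 ∘ₗ (mul' k E) ∘ₗ lTensor E gS) ∘ₗ
      (TensorProduct.assoc k E B M).symm.toLinearMap with hΛ₀
  have claimPθ : ∀ z : E ⊗[k] M,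
      (TensorProduct.assoc k E B M) (rTensor M ρE.toLinearMap (kappaMap ρM gS z))
        = Λ (lTensor E ρM z) := by
    intro z
    induction z using TensorProduct.induction_on with
    | zero => simp
    | add x y hx hy => simp only [map_add, hx, hy]
    | tmul e m =>
      rw [kappa_tmul, lTensor_tmul]
      have sub : ∀ t : B ⊗[k] M,
          (TensorProduct.assoc k E B M) (rTensor M ρE.toLinearMap
            (rTensor M ((LinearMap.mulLeft k e) ∘ₗ gS) t)) = Λ (e ⊗ₜ t) := by
        intro t
        induction t using TensorProduct.induction_on with
        | zero => simp
        | add x y hx hy => simp only [map_add, tmul_add, hx, hy]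
        | tmul b m' =>
          simp only [rTensor_tmul, coe_comp, Function.comp_apply, mulLeft_apply,
            AlgHom.toLinearMap_apply, hΛ, LinearEquiv.coe_coe, assoc_symm_tmul, map_tmul]
          congr 2
          rw [map_mul]
          rfl
      exact sub (ρM m)
  have claimQθ : ∀ z : E ⊗[k] M,
      (TensorProduct.assoc k E B M) (rTensor M ins1 (kappaMap ρM gS z))
        = Λ₀ (lTensor E ρM z) := by
    intro z
    induction z using TensorProduct.induction_on with
    | zero => simp
    | add x y hx hy => simp only [map_add, hx, hy]
    | tmul e m =>
      rw [kappa_tmul, lTensor_tmul]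
      have sub : ∀ t : B ⊗[k] M,
          (TensorProduct.assoc k E B M) (rTensor M ins1
            (rTensor M ((LinearMap.mulLeft k e) ∘ₗ gS) t)) = Λ₀ (e ⊗ₜ t) := by
        intro t
        induction t using TensorProduct.induction_on with
        | zero => simp
        | add x y hx hy => simp only [map_add, tmul_add, hx, hy]
        | tmul b m' =>
          simp only [rTensor_tmul, coe_comp, Function.comp_apply, mulLeft_apply,
            AlgHom.toLinearMap_apply, hΛ₀, LinearEquiv.coe_coe, assoc_symm_tmul, map_tmul,
            lTensor_tmul, mul'_apply]
      exact sub (ρM m)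
  have claimΛP : ∀ z : E ⊗[k] M,
      Λ ((TensorProduct.assoc k E B M) (rTensor M ρE.toLinearMap z))
        = (TensorProduct.assoc k E B M) (rTensor M
            ((mul' k (E ⊗[k] B)) ∘ₗ map ρE.toLinearMap ν ∘ₗ ρE.toLinearMap) z) := by
    intro z
    induction z using TensorProduct.induction_on with
    | zero => simp
    | add x y hx hy => simp only [map_add, hx, hy]
    | tmul e m =>
      rw [rTensor_tmul]
      have sub : ∀ v : E ⊗[k] B,
          Λ ((TensorProduct.assoc k E B M) (v ⊗ₜ m))
            = (TensorProduct.assoc k E B M)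
                ((mul' k (E ⊗[k] B) (map ρE.toLinearMap ν v)) ⊗ₜ m) := by
        intro v
        induction v using TensorProduct.induction_on with
        | zero => simp
        | add x y hx hy => simp only [map_add, add_tmul, map_add, hx, hy]
        | tmul e' b =>
          simp only [hΛ, coe_comp, Function.comp_apply, LinearEquiv.coe_coe, assoc_tmul,
            assoc_symm_tmul, rTensor_tmul, map_tmul]
      rw [sub (ρE.toLinearMap e)]
      simp only [rTensor_tmul, coe_comp, Function.comp_apply, AlgHom.toLinearMap_apply]
  have claimΛ₀P : ∀ z : E ⊗[k] M,
      Λ₀ ((TensorProduct.assoc k E B M) (rTensor M ρE.toLinearMap z))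
        = (TensorProduct.assoc k E B M) (rTensor M
            (ins1 ∘ₗ (mul' k E) ∘ₗ lTensor E gS ∘ₗ ρE.toLinearMap) z) := by
    intro z
    induction z using TensorProduct.induction_on with
    | zero => simp
    | add x y hx hy => simp only [map_add, hx, hy]
    | tmul e m =>
      rw [rTensor_tmul]
      have sub : ∀ v : E ⊗[k] B,
          Λ₀ ((TensorProduct.assoc k E B M) (v ⊗ₜ m))
            = (TensorProduct.assoc k E B M)
                ((ins1 (mul' k E (lTensor E gS v))) ⊗ₜ m) := by
        intro v
        induction v using TensorProduct.induction_on with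
        | zero => simp
        | add x y hx hy => simp only [map_add, add_tmul, map_add, hx, hy]
        | tmul e' b =>
          simp only [hΛ₀, coe_comp, Function.comp_apply, LinearEquiv.coe_coe, assoc_tmul,
            assoc_symm_tmul, rTensor_tmul, lTensor_tmul, mul'_apply]
      rw [sub (ρE.toLinearMap e)]
      simp only [rTensor_tmul, coe_comp, Function.comp_apply, AlgHom.toLinearMap_apply]
  have hsub : ∀ z : E ⊗[k] M,
      (TensorProduct.assoc k E B M) (rTensor M (ρE.toLinearMap - ins1) z)
        = (TensorProduct.assoc k E B M) (rTensor M ρE.toLinearMap z)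
          - (TensorProduct.assoc k E B M) (rTensor M ins1 z) := by
    intro z
    induction z using TensorProduct.induction_on with
    | zero => simp
    | add x y hx hy =>
        simp only [map_add, hx, hy]
        abel
    | tmul e m => simp [sub_tmul, tmul_sub, map_sub, LinearMap.sub_apply]
  rw [← (TensorProduct.assoc k E B M).map_eq_zero_iff, hsub, claimPθ x, claimQθ x, ← hx,
    claimΛP x, claimΛ₀P x]
  have hkey := key_psi ρE hEcoassoc γ hγ
  have : ((mul' k (E ⊗[k] B)) ∘ₗ map ρE.toLinearMap ν ∘ₗ ρE.toLinearMap)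
      = (ins1 ∘ₗ (mul' k E) ∘ₗ lTensor E gS ∘ₗ ρE.toLinearMap) := by
    rw [hν, hins1, hgS]
    rw [← LinearMap.comp_assoc]
    exact hkey
  rw [this, sub_self]


end AuxMain

theorem image_of_kappa_on_coinvariants_eq_cotensor
    {k : Type*} [Field k]
    {B : Type*} [Ring B] [HopfAlgebra k B]
    {E : Type*} [Ring E] [Algebra k E]
    {M : Type*} [AddCommGroup M] [Module k M]
    (ρE : E →ₐ[k] E ⊗[k] B)
    (ρM : M →ₗ[k] B ⊗[k] M)
    -- comodule axioms
    (hEcounit : (TensorProduct.rid k E).toLinearMap ∘ₗ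
        (lTensor E (counit : B →ₗ[k] k)) ∘ₗ ρE.toLinearMap = LinearMap.id)
    (hEcoassoc : (TensorProduct.assoc k E B B).toLinearMap ∘ₗ
        (rTensor B ρE.toLinearMap) ∘ₗ ρE.toLinearMap
        = (lTensor E (comul : B →ₗ[k] B ⊗[k] B)) ∘ₗ ρE.toLinearMap)
    (hMcounit : (TensorProduct.lid k M).toLinearMap ∘ₗ
        (rTensor M (counit : B →ₗ[k] k)) ∘ₗ ρM = LinearMap.id)
    (hMcoassoc : (TensorProduct.assoc k B B M).toLinearMap ∘ₗ
        (rTensor M (comul : B →ₗ[k] B ⊗[k] B)) ∘ₗ ρM = (lTensor B ρM) ∘ₗ ρM)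
    (γ : B →ₐ[k] E)
    (hγ : ρE.toLinearMap ∘ₗ γ.toLinearMap
        = (TensorProduct.map γ.toLinearMap LinearMap.id) ∘ₗ (comul : B →ₗ[k] B ⊗[k] B))
    -- the coinvariant subalgebra, as a submodule of E
    (coinv : Submodule k E)
    (hcoinv : ∀ e : E, e ∈ coinv ↔ ρE e = e ⊗ₜ[k] (1 : B)) :
    Submodule.map (kappaMap ρM γ.toLinearMap)
        (LinearMap.range (rTensor M coinv.subtype))
      = LinearMap.ker
          (((TensorProduct.assoc k E B M).toLinearMap ∘ₗ rTensor M ρE.toLinearMap)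
            - lTensor E ρM) := by
  have hker : coinv = LinearMap.ker
      (ρE.toLinearMap - (TensorProduct.mk k E B).flip 1) := by
    ext e
    simp only [hcoinv e, LinearMap.mem_ker, LinearMap.sub_apply, AlgHom.toLinearMap_apply,
      flip_apply, TensorProduct.mk_apply, sub_eq_zero]
  apply le_antisymm
  · rintro y hy
    rw [Submodule.mem_map] at hy
    obtain ⟨z, hz, rfl⟩ := hy
    rw [LinearMap.mem_range] at hz
    obtain ⟨w, rfl⟩ := hz
    rw [LinearMap.mem_ker]
    induction w using TensorProduct.induction_on with
    | zero => simp
    | tmul c m =>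
        rw [rTensor_tmul]
        exact forward_vanish ρM hMcoassoc ρE γ hγ (coinv.subtype c) ((hcoinv c).mp c.2) m
    | add a b ha hb => simp only [map_add, ha, hb, add_zero]
  · intro x hx
    rw [LinearMap.mem_ker] at hx
    have hx' : (TensorProduct.assoc k E B M) (rTensor M ρE.toLinearMap x)
        = lTensor E ρM x := by
      have h := hx
      simp only [LinearMap.sub_apply, coe_comp, Function.comp_apply,
        LinearEquiv.coe_coe] at h
      exact sub_eq_zero.mp h
    have hmem : kappaMap ρM (γ.toLinearMap ∘ₗ (antipode k : B →ₗ[k] B)) x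
        ∈ LinearMap.range (rTensor M coinv.subtype) := by
      rw [hker]
      have hexact := Module.Flat.rTensor_exact (R := k) (M := M)
        (LinearMap.exact_subtype_ker_map
          (ρE.toLinearMap - (TensorProduct.mk k E B).flip 1))
      have hrange := LinearMap.exact_iff.mp hexact
      rw [← hrange, LinearMap.mem_ker]
      exact backward_mem ρM ρE hEcoassoc γ hγ x hx'
    exact Submodule.mem_map.mpr
      ⟨kappaMap ρM (γ.toLinearMap ∘ₗ (antipode k : B →ₗ[k] B)) x, hmem,
        kappa_inv ρM hMcounit hMcoassoc γ x⟩
end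

section
/- Let H be a Hopf *-algebra over ℂ with left-invariant integral ∫, and let (V, ρ, ⟨·|·⟩) be a finite-dimensional simple unitary right H-comodule, i.e. the inner product satisfies the coinvariance condition ⟨w|z⟩·1_H = ∑ ⟨w₍₀₎|z₍₀₎⟩ z₍₁₎ w₍₁₎* for all w, z ∈ V. Fix w ∈ V and define A : V → V by A(v) = ∑ ⟨w₍₀₎|v⟩ · w'₍₀₎ · ∫(w₍₁₎* w'₍₁₎), where ∑ w₍₀₎ ⊗ w₍₁₎ and ∑ w'₍₀₎ ⊗ w'₍₁₎ denote two copies of ρ(w). Then A is an H-comodule endomorphism of V, hence A = α·id_V for some α ∈ ℂ. -/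
open TensorProduct Coalgebra LinearMap

theorem basis_rep {R V H : Type*} [CommRing R] [AddCommGroup V] [Module R V]
    [AddCommGroup H] [Module R H] {ι : Type*} [Fintype ι] (b : Module.Basis ι R V) (t : V ⊗[R] H) :
    t = ∑ k, b k ⊗ₜ[R] (TensorProduct.lid R H ((rTensor H (b.coord k)) t)) := by
  induction t using TensorProduct.induction_on with
  | zero => simp
  | tmul x h =>
      simp only [rTensor_tmul, lid_tmul, Module.Basis.coord_apply]
      calc (x ⊗ₜ[R] h : V ⊗[R] H) = (∑ k, b.repr x k • b k) ⊗ₜ[R] h := by rw [Module.Basis.sum_repr]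
        _ = ∑ k, b k ⊗ₜ[R] (b.repr x k • h) := by
            rw [TensorProduct.sum_tmul]
            refine Finset.sum_congr rfl fun k _ => ?_
            rw [TensorProduct.smul_tmul, TensorProduct.tmul_smul]
  | add x y hx hy =>
      simp only [map_add, TensorProduct.tmul_add]
      rw [Finset.sum_add_distrib]
      exact congrArg₂ (· + ·) hx hy

theorem basis_inj {R V N : Type*} [CommRing R] [AddCommGroup V] [Module R V]
    [AddCommGroup N] [Module R N] {ι : Type*} [Fintype ι] [DecidableEq ι] (b : Module.Basis ι R V)
    (x y : ι → N) (h : ∑ k, b k ⊗ₜ[R] x k = ∑ k, b k ⊗ₜ[R] y k) : ∀ k, x k = y k := by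
  intro m
  have h2 := congrArg (fun t => TensorProduct.lid R N ((rTensor N (b.coord m)) t)) h
  simpa [map_sum, Module.Basis.coord_apply, Module.Basis.repr_self, Finsupp.single_apply, ite_smul,
    Finset.sum_ite_eq'] using h2

theorem schur_aux {H : Type*} [AddCommGroup H] [Module ℂ H]
    {V : Type*} [AddCommGroup V] [Module ℂ V] [FiniteDimensional ℂ V]
    (ρ : V →ₗ[ℂ] V ⊗[ℂ] H)
    (hsimple : ∀ W : Submodule ℂ V,
        (∀ u ∈ W, ρ u ∈ LinearMap.range (rTensor H W.subtype)) → W = ⊥ ∨ W = ⊤)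
    (A : V →ₗ[ℂ] V) (hcom : ρ ∘ₗ A = (rTensor H A) ∘ₗ ρ) :
    ∃ α : ℂ, A = α • LinearMap.id := by
  by_cases hV : Subsingleton V
  · exact ⟨0, by ext v; rw [Subsingleton.elim v 0]; simp⟩
  · have : Nontrivial V := not_subsingleton_iff_nontrivial.mp hV
    obtain ⟨α, hα⟩ := Module.End.exists_eigenvalue (A : Module.End ℂ V)
    refine ⟨α, ?_⟩
    set B : V →ₗ[ℂ] V := A - α • LinearMap.id with hBdef
    have hBcom : ρ ∘ₗ B = (rTensor H B) ∘ₗ ρ := by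
      have h1 : rTensor H B = rTensor H A - α • rTensor H (LinearMap.id (R := ℂ) (M := V)) := by
        ext t
        simp [hBdef, rTensor_sub, rTensor_smul]
      rw [h1]
      ext v
      simp only [coe_comp, Function.comp_apply, hBdef, LinearMap.sub_apply, LinearMap.smul_apply,
        LinearMap.id_apply, map_sub, map_smul, LinearMap.sub_comp, LinearMap.smul_comp]
      rw [← comp_apply ρ A, hcom]
      simp [rTensor]
    set W : Submodule ℂ V := LinearMap.ker B with hWdef
    have hWne : W ≠ ⊥ := by
      have h0 : W = Module.End.eigenspace (A : Module.End ℂ V) α := by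
        ext x
        rw [Module.End.mem_eigenspace_iff]
        simp [hWdef, LinearMap.mem_ker, hBdef, sub_eq_zero]
      rw [h0]
      exact hα
    have hsub : ∀ u ∈ W, ρ u ∈ LinearMap.range (rTensor H W.subtype) := by
      intro u hu
      have hexact : Function.Exact (rTensor H W.subtype) (rTensor H W.mkQ) :=
        Module.Flat.rTensor_exact (M := H) (LinearMap.exact_subtype_mkQ W)
      rw [LinearMap.mem_range]
      have hmem : ρ u ∈ Set.range (rTensor H W.subtype) := by
        rw [← hexact (ρ u)]
        -- show rTensor H W.mkQ (ρ u) = 0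
        set f : (V ⧸ W) →ₗ[ℂ] V := W.liftQ B (le_refl W)
        have hf : Function.Injective f := by
          rw [← LinearMap.ker_eq_bot]
          exact Submodule.ker_liftQ_eq_bot _ _ _ (le_refl _)
        have hinj := Module.Flat.rTensor_preserves_injective_linearMap (M := H) f hf
        apply hinj
        rw [map_zero, ← rTensor_comp_apply]
        have hfB : f ∘ₗ W.mkQ = B := Submodule.liftQ_mkQ _ _ _
        rw [hfB, ← comp_apply, ← hBcom, comp_apply]
        have : B u = 0 := hu
        rw [this, map_zero]
      obtain ⟨t, ht⟩ := hmem
      exact ⟨t, ht⟩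
    rcases hsimple W hsub with h | h
    · exact absurd h hWne
    · ext v
      have hv : v ∈ W := h ▸ Submodule.mem_top
      have : B v = 0 := hv
      have h2 : A v - α • v = 0 := by simpa [hBdef] using this
      simpa [sub_eq_zero] using h2


set_option maxHeartbeats 2000000 in
theorem coherent_state_operator_is_scalar
    {H : Type*} [Ring H] [HopfAlgebra ℂ H] [StarRing H]
    -- * is conjugate-linear and compatible with the comultiplication and counit
    (hstar_smul : ∀ (c : ℂ) (x : H), star (c • x) = (starRingEnd ℂ c) • star x)
    (hstar_comul : ∀ (x : H) (n : ℕ) (y z : Fin n → H),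
        (comul (R := ℂ) x : H ⊗[ℂ] H) = ∑ i, y i ⊗ₜ[ℂ] z i →
        (comul (R := ℂ) (star x) : H ⊗[ℂ] H) = ∑ i, star (y i) ⊗ₜ[ℂ] star (z i))
    (hstar_counit : ∀ x : H, counit (R := ℂ) (star x) = starRingEnd ℂ (counit (R := ℂ) x))
    -- the left-invariant integral
    (I : H →ₗ[ℂ] ℂ)
    (hI : (TensorProduct.rid ℂ H).toLinearMap ∘ₗ (lTensor H I) ∘ₗ
        (comul : H →ₗ[ℂ] H ⊗[ℂ] H) = (Algebra.linearMap ℂ H) ∘ₗ I)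
    -- the comodule V with its inner ℂ product
    {V : Type*} [NormedAddCommGroup V] [InnerProductSpace ℂ V] [FiniteDimensional ℂ V]
    (ρ : V →ₗ[ℂ] V ⊗[ℂ] H)
    (hcounit : (TensorProduct.rid ℂ V).toLinearMap ∘ₗ
        (lTensor V (counit : H →ₗ[ℂ] ℂ)) ∘ₗ ρ = LinearMap.id)
    (hcoassoc : (TensorProduct.assoc ℂ V H H).toLinearMap ∘ₗ (rTensor H ρ) ∘ₗ ρ
        = (lTensor V (comul : H →ₗ[ℂ] H ⊗[ℂ] H)) ∘ₗ ρ)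
    -- simplicity: no proper nonzero subcomodules
    (hsimple : ∀ W : Submodule ℂ V,
        (∀ u ∈ W, ρ u ∈ LinearMap.range (rTensor H W.subtype)) → W = ⊥ ∨ W = ⊤)
    -- coinvariance of the inner ℂ product, in terms of Sweedler representations
    (hcoinv : ∀ (w z : V) (n m : ℕ) (w0 : Fin n → V) (w1 : Fin n → H)
        (z0 : Fin m → V) (z1 : Fin m → H),
        ρ w = ∑ i, w0 i ⊗ₜ[ℂ] w1 i → ρ z = ∑ j, z0 j ⊗ₜ[ℂ] z1 j →
        (inner ℂ w z : ℂ) • (1 : H) = ∑ i, ∑ j,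
          (inner ℂ (w0 i) (z0 j) : ℂ) • (z1 j * star (w1 i)))
    -- the fixed vector w, a Sweedler representation of ρ w, and the operator A
    (w : V) (n : ℕ) (w0 : Fin n → V) (w1 : Fin n → H)
    (hw : ρ w = ∑ i, w0 i ⊗ₜ[ℂ] w1 i)
    (A : V →ₗ[ℂ] V)
    (hA : ∀ v : V, A v = ∑ i, ∑ j,
        (I (star (w1 i) * w1 j)) • ((inner ℂ (w0 i) v : ℂ) • w0 j)) :
    (ρ ∘ₗ A = (rTensor H A) ∘ₗ ρ) ∧ ∃ α : ℂ, A = α • LinearMap.id := by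
  classical
  set d := Module.finrank ℂ V with hd
  set b := stdOrthonormalBasis ℂ V with hb
  set T : Fin d → (V →ₗ[ℂ] H) := fun k =>
    (TensorProduct.lid ℂ H).toLinearMap ∘ₗ (rTensor H (b.toBasis.coord k)) ∘ₗ ρ with hT
  have hrep : ∀ v : V, ρ v = ∑ k, b k ⊗ₜ[ℂ] T k v := by
    intro v
    have := basis_rep b.toBasis (ρ v)
    simpa [hT] using this
  have hortho : ∀ k l : Fin d, (inner ℂ (b k) (b l) : ℂ) = if k = l then 1 else 0 :=
    orthonormal_iff_ite.mp b.orthonormal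
  -- coassociativity in components
  have hC1 : ∀ (m : Fin d) (v : V),
      (comul (R := ℂ) (T m v) : H ⊗[ℂ] H) = ∑ k, T m (b k) ⊗ₜ[ℂ] T k v := by
    intro m v
    have h := LinearMap.congr_fun hcoassoc v
    simp only [coe_comp, Function.comp_apply, LinearEquiv.coe_coe] at h
    rw [hrep v] at h
    have hL : (TensorProduct.assoc ℂ V H H) ((rTensor H ρ) (∑ k, b k ⊗ₜ[ℂ] T k v))
        = ∑ k, ∑ p, b p ⊗ₜ[ℂ] (T p (b k) ⊗ₜ[ℂ] T k v) := by
      rw [map_sum, map_sum]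
      refine Finset.sum_congr rfl fun k _ => ?_
      rw [rTensor_tmul, hrep (b k), TensorProduct.sum_tmul, map_sum]
      refine Finset.sum_congr rfl fun p _ => ?_
      rw [TensorProduct.assoc_tmul]
    have hR : (lTensor V (comul (R := ℂ))) (∑ k, b k ⊗ₜ[ℂ] T k v)
        = ∑ k, b k ⊗ₜ[ℂ] (comul (R := ℂ) (T k v) : H ⊗[ℂ] H) := by
      rw [map_sum]; exact Finset.sum_congr rfl fun k _ => by rw [lTensor_tmul]
    rw [hL, hR, Finset.sum_comm] at h
    have h' : ∑ y, (b.toBasis y) ⊗ₜ[ℂ] (∑ x, T y (b x) ⊗ₜ[ℂ] T x v)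
        = ∑ y, (b.toBasis y) ⊗ₜ[ℂ] ((comul (R := ℂ) (T y v)) : H ⊗[ℂ] H) := by
      simpa [TensorProduct.tmul_sum, OrthonormalBasis.coe_toBasis] using h
    exact (basis_inj b.toBasis _ _ h' m).symm

  -- coinvariance in components
  have hC3 : ∀ x z : V, (inner ℂ x z : ℂ) • (1 : H) = ∑ k, T k z * star (T k x) := by
    intro x z
    have h := hcoinv x z d d (fun k => b k) (fun k => T k x) (fun k => b k) (fun k => T k z)
      (hrep x) (hrep z)
    rw [h]
    rw [Finset.sum_comm]
    refine Finset.sum_congr rfl fun j _ => ?_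
    rw [Finset.sum_eq_single j]
    · rw [hortho]; simp
    · intro i _ hij
      rw [hortho]; simp [hij]
    · intro hj; exact absurd (Finset.mem_univ j) hj
  -- star of comultiplication in components
  have hsc : ∀ k : Fin d, (comul (R := ℂ) (star (T k w)) : H ⊗[ℂ] H)
      = ∑ p, star (T k (b p)) ⊗ₜ[ℂ] star (T p w) :=
    fun k => hstar_comul (T k w) d _ _ (hC1 k w)
  -- invariance pointwise
  have hIp : ∀ a : H, (TensorProduct.rid ℂ H) ((lTensor H I) (comul (R := ℂ) a)) = I a • (1 : H) := by
    intro a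
    have h := LinearMap.congr_fun hI a
    simp only [coe_comp, Function.comp_apply, LinearEquiv.coe_coe, Algebra.linearMap_apply] at h
    rw [h, Algebra.algebraMap_eq_smul_one]
  -- the key invariance identity E
  have hE : ∀ k m : Fin d, I (star (T k w) * T m w) • (1 : H)
      = ∑ p, ∑ q, I (star (T p w) * T q w) • (star (T k (b p)) * T m (b q)) := by
    intro k m
    have hD : (comul (R := ℂ) (star (T k w) * T m w) : H ⊗[ℂ] H)
        = ∑ p, ∑ q, (star (T k (b p)) * T m (b q)) ⊗ₜ[ℂ] (star (T p w) * T q w) := by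
      rw [Bialgebra.comul_mul, hsc k, hC1 m w, Finset.sum_mul_sum]
      refine Finset.sum_congr rfl fun p _ => Finset.sum_congr rfl fun q _ => ?_
      rw [Algebra.TensorProduct.tmul_mul_tmul]
    have h := hIp (star (T k w) * T m w)
    rw [hD] at h
    rw [← h, map_sum, map_sum]
    refine (Finset.sum_congr rfl fun p _ => ?_)
    rw [map_sum, map_sum]
    refine (Finset.sum_congr rfl fun q _ => ?_)
    rw [lTensor_tmul, TensorProduct.rid_tmul]
  -- rewrite A in terms of the orthonormal components
  have hA2 : ∀ v : V, A v = ∑ k, ∑ l,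
      I (star (T k w) * T l w) • ((inner ℂ (b k) v : ℂ) • b l) := by
    intro v
    have hQ : ∀ c : H, ∑ i, (inner ℂ (w0 i) v : ℂ) * I (star (w1 i) * c)
        = ∑ k, (inner ℂ (b k) v : ℂ) * I (star (T k w) * c) := by
      intro c
      let f : H →ₗ[ℂ] ℂ :=
        { toFun := fun a => starRingEnd ℂ (I (star a * c))
          map_add' := by
            intro a a'
            show starRingEnd ℂ (I (star (a + a') * c)) = _
            rw [star_add, add_mul, map_add, map_add]
          map_smul' := by
            intro s a
            show starRingEnd ℂ (I (star (s • a) * c)) = s * starRingEnd ℂ (I (star a * c))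
            rw [hstar_smul, smul_mul_assoc, map_smul, smul_eq_mul, map_mul]
            simp }
      let g : V →ₗ[ℂ] ℂ :=
        { toFun := fun x => (inner ℂ v x : ℂ)
          map_add' := fun a a' => inner_add_right v a a'
          map_smul' := fun s a => inner_smul_right v a s }
      let Q : V ⊗[ℂ] H →ₗ[ℂ] ℂ := (LinearMap.mul' ℂ ℂ) ∘ₗ (TensorProduct.map g f)
      have hQt : ∀ (x : V) (a : H), Q (x ⊗ₜ[ℂ] a)
          = (inner ℂ v x : ℂ) * starRingEnd ℂ (I (star a * c)) := by
        intro x a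
        simp only [Q, coe_comp, Function.comp_apply, TensorProduct.map_tmul,
          LinearMap.mul'_apply]
        rfl
      have h1 : Q (ρ w) = ∑ i, (inner ℂ v (w0 i) : ℂ) * starRingEnd ℂ (I (star (w1 i) * c)) := by
        rw [hw, map_sum]
        exact Finset.sum_congr rfl fun i _ => hQt _ _
      have h2 : Q (ρ w) = ∑ k, (inner ℂ v (b k) : ℂ) * starRingEnd ℂ (I (star (T k w) * c)) := by
        rw [hrep w, map_sum]
        exact Finset.sum_congr rfl fun k _ => hQt _ _
      have h3 := congrArg (starRingEnd ℂ) (h1.symm.trans h2)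
      simpa [map_sum, map_mul, inner_conj_symm] using h3
    let S : H →ₗ[ℂ] ℂ := ∑ i, (inner ℂ (w0 i) v : ℂ) • (I ∘ₗ LinearMap.mulLeft ℂ (star (w1 i)))
    have hSapp : ∀ h : H, S h = ∑ i, (inner ℂ (w0 i) v : ℂ) * I (star (w1 i) * h) := by
      intro h
      simp [S, LinearMap.sum_apply, smul_eq_mul]
    let P : V ⊗[ℂ] H →ₗ[ℂ] V := (TensorProduct.rid ℂ V).toLinearMap ∘ₗ lTensor V S
    have hPt : ∀ (x : V) (a : H), P (x ⊗ₜ[ℂ] a) = S a • x := by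
      intro x a
      simp [P, lTensor_tmul, TensorProduct.rid_tmul]
    have h1 : P (ρ w) = ∑ j, S (w1 j) • w0 j := by
      rw [hw, map_sum]; exact Finset.sum_congr rfl fun j _ => hPt _ _
    have h2 : P (ρ w) = ∑ l, S (T l w) • b l := by
      rw [hrep w, map_sum]; exact Finset.sum_congr rfl fun l _ => hPt _ _
    calc A v = ∑ j, S (w1 j) • w0 j := by
          rw [hA v, Finset.sum_comm]
          refine Finset.sum_congr rfl fun j _ => ?_
          rw [hSapp, Finset.sum_smul]
          refine Finset.sum_congr rfl fun i _ => ?_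
          rw [smul_smul, mul_comm]
      _ = ∑ l, S (T l w) • b l := h1 ▸ h2
      _ = ∑ k, ∑ l, I (star (T k w) * T l w) • ((inner ℂ (b k) v : ℂ) • b l) := by
          rw [Finset.sum_comm]
          refine Finset.sum_congr rfl fun l _ => ?_
          rw [hSapp, hQ (T l w), Finset.sum_smul]
          refine Finset.sum_congr rfl fun k _ => ?_
          rw [smul_smul, mul_comm]
  have hAb : ∀ k : Fin d, A (b k) = ∑ l, I (star (T k w) * T l w) • b l := by
    intro k
    rw [hA2 (b k), Finset.sum_eq_single k]
    · refine Finset.sum_congr rfl fun l _ => ?_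
      rw [hortho]; simp
    · intro p _ hpk
      refine Finset.sum_eq_zero fun l _ => ?_
      rw [hortho]; simp [hpk]
    · intro hk; exact absurd (Finset.mem_univ k) hk
  have part1 : ρ ∘ₗ A = (rTensor H A) ∘ₗ ρ := by
    apply LinearMap.ext
    intro v
    simp only [coe_comp, Function.comp_apply]
    have key : ∀ m : Fin d,
        ∑ k, ∑ l, ((inner ℂ (b k) v : ℂ) * I (star (T k w) * T l w)) • T m (b l)
        = ∑ k, I (star (T k w) * T m w) • T k v := by
      intro m
      symm
      calc ∑ k, I (star (T k w) * T m w) • T k v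
          = ∑ k, T k v * (I (star (T k w) * T m w) • (1 : H)) := by
            refine Finset.sum_congr rfl fun k _ => ?_
            rw [mul_smul_comm, mul_one]
        _ = ∑ k, ∑ p, ∑ q, I (star (T p w) * T q w)
              • (T k v * (star (T k (b p)) * T m (b q))) := by
            refine Finset.sum_congr rfl fun k _ => ?_
            rw [hE k m, Finset.mul_sum]
            refine Finset.sum_congr rfl fun p _ => ?_
            rw [Finset.mul_sum]
            exact Finset.sum_congr rfl fun q _ => by rw [mul_smul_comm]
        _ = ∑ p, ∑ q, I (star (T p w) * T q w)
              • ((∑ k, T k v * star (T k (b p))) * T m (b q)) := by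
            rw [Finset.sum_comm]
            refine Finset.sum_congr rfl fun p _ => ?_
            rw [Finset.sum_comm]
            refine Finset.sum_congr rfl fun q _ => ?_
            rw [Finset.sum_mul, Finset.smul_sum]
            exact Finset.sum_congr rfl fun k _ => by rw [mul_assoc]
        _ = ∑ p, ∑ q, ((inner ℂ (b p) v : ℂ) * I (star (T p w) * T q w)) • T m (b q) := by
            refine Finset.sum_congr rfl fun p _ => Finset.sum_congr rfl fun q _ => ?_
            rw [← hC3 (b p) v, smul_mul_assoc, one_mul, smul_smul, mul_comm]
    have hL : ρ (A v) = ∑ m, b m ⊗ₜ[ℂ]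
        (∑ k, ∑ l, ((inner ℂ (b k) v : ℂ) * I (star (T k w) * T l w)) • T m (b l)) := by
      calc ρ (A v) = ∑ k, ∑ l, ∑ m, b m ⊗ₜ[ℂ]
            (((inner ℂ (b k) v : ℂ) * I (star (T k w) * T l w)) • T m (b l)) := by
            rw [hA2 v, map_sum]
            refine Finset.sum_congr rfl fun k _ => ?_
            rw [map_sum]
            refine Finset.sum_congr rfl fun l _ => ?_
            rw [map_smul, map_smul, hrep (b l), Finset.smul_sum, Finset.smul_sum]
            refine Finset.sum_congr rfl fun m _ => ?_
            rw [smul_smul, mul_comm, ← TensorProduct.tmul_smul]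
        _ = ∑ m, ∑ k, ∑ l, b m ⊗ₜ[ℂ]
            (((inner ℂ (b k) v : ℂ) * I (star (T k w) * T l w)) • T m (b l)) := by
            rw [show (∑ k, ∑ l, ∑ m, b m ⊗ₜ[ℂ]
              (((inner ℂ (b k) v : ℂ) * I (star (T k w) * T l w)) • T m (b l)))
              = ∑ k, ∑ m, ∑ l, b m ⊗ₜ[ℂ]
              (((inner ℂ (b k) v : ℂ) * I (star (T k w) * T l w)) • T m (b l)) from
              Finset.sum_congr rfl fun k _ => Finset.sum_comm]
            exact Finset.sum_comm
        _ = ∑ m, b m ⊗ₜ[ℂ]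
            (∑ k, ∑ l, ((inner ℂ (b k) v : ℂ) * I (star (T k w) * T l w)) • T m (b l)) := by
            refine Finset.sum_congr rfl fun m _ => ?_
            rw [TensorProduct.tmul_sum]
            exact Finset.sum_congr rfl fun k _ => (TensorProduct.tmul_sum _ _ _).symm
    have hR : (rTensor H A) (ρ v)
        = ∑ m, b m ⊗ₜ[ℂ] (∑ k, I (star (T k w) * T m w) • T k v) := by
      rw [hrep v, map_sum]
      calc ∑ k, (rTensor H A) (b k ⊗ₜ[ℂ] T k v)
          = ∑ k, ∑ m, b m ⊗ₜ[ℂ] (I (star (T k w) * T m w) • T k v) := by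
            refine Finset.sum_congr rfl fun k _ => ?_
            rw [rTensor_tmul, hAb k, TensorProduct.sum_tmul]
            exact Finset.sum_congr rfl fun m _ => TensorProduct.smul_tmul _ _ _
        _ = ∑ m, ∑ k, b m ⊗ₜ[ℂ] (I (star (T k w) * T m w) • T k v) := Finset.sum_comm
        _ = ∑ m, b m ⊗ₜ[ℂ] (∑ k, I (star (T k w) * T m w) • T k v) := by
            exact Finset.sum_congr rfl fun m _ => (TensorProduct.tmul_sum _ _ _).symm
    rw [hL, hR]
    exact Finset.sum_congr rfl fun m _ => by rw [key m]
  exact ⟨part1, schur_aux ρ hsimple A part1⟩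
end

section
/- Let E be an associative unital ring and S₁, S₂ ⊆ E two left Ore sets (multiplicative sets satisfying the left Ore condition and left reversibility). Then the multiplicative set S = S₁ ∨ S₂ generated by S₁ ∪ S₂ is again a left Ore set in E. -/
/-!
STATEMENT 10: If `S₁, S₂` are left Ore sets in an associative unital ring `E` (multiplicative
sets satisfying the left Ore condition and left reversibility), then the multiplicative set
`S₁ ∨ S₂` generated by `S₁ ∪ S₂` is again a left Ore set in `E`.
-/

/-- A submonoid `S` of a ring `E` is a left Ore set if it satisfies the left Ore condition
(`∀ s ∈ S, r ∈ E, ∃ s' ∈ S, r' ∈ E, s' r = r' s`) and left reversibility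
(`r s = 0` for some `s ∈ S` implies `s' r = 0` for some `s' ∈ S`). -/
def IsLeftOreSet {E : Type*} [Ring E] (S : Submonoid E) : Prop :=
  (∀ s ∈ S, ∀ r : E, ∃ s' ∈ S, ∃ r' : E, s' * r = r' * s) ∧
  (∀ r : E, ∀ s ∈ S, r * s = 0 → ∃ s' ∈ S, s' * r = 0)

theorem join_of_left_ore_sets_is_left_ore
    {E : Type*} [Ring E] (S₁ S₂ : Submonoid E)
    (h₁ : IsLeftOreSet S₁) (h₂ : IsLeftOreSet S₂) :
    IsLeftOreSet (S₁ ⊔ S₂) := by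
  have hsup : S₁ ⊔ S₂ = Submonoid.closure ((S₁ : Set E) ∪ (S₂ : Set E)) := by
    rw [Submonoid.closure_union, Submonoid.closure_eq, Submonoid.closure_eq]
  constructor
  · intro s hs
    rw [hsup] at hs
    induction hs using Submonoid.closure_induction with
    | mem x hx =>
      intro r
      rcases hx with hx | hx
      · obtain ⟨s', hs', r', h⟩ := h₁.1 x hx r
        exact ⟨s', Submonoid.mem_sup_left hs', r', h⟩
      · obtain ⟨s', hs', r', h⟩ := h₂.1 x hx r
        exact ⟨s', Submonoid.mem_sup_right hs', r', h⟩
    | one => intro r; exact ⟨1, one_mem _, r, by rw [one_mul, mul_one]⟩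
    | mul x y hx hy ihx ihy =>
      intro r
      obtain ⟨s', hs', r', h⟩ := ihy r
      obtain ⟨s'', hs'', r'', h'⟩ := ihx r'
      refine ⟨s'' * s', mul_mem hs'' hs', r'', ?_⟩
      rw [mul_assoc, h, ← mul_assoc, h', mul_assoc]
  · have key : ∀ s ∈ Submonoid.closure ((S₁ : Set E) ∪ (S₂ : Set E)), ∀ r : E,
        r * s = 0 → ∃ s' ∈ S₁ ⊔ S₂, s' * r = 0 := by
      intro s hs
      induction hs using Submonoid.closure_induction with
      | mem x hx =>
        intro r hr
        rcases hx with hx | hx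
        · obtain ⟨s', hs', h⟩ := h₁.2 r x hx hr
          exact ⟨s', Submonoid.mem_sup_left hs', h⟩
        · obtain ⟨s', hs', h⟩ := h₂.2 r x hx hr
          exact ⟨s', Submonoid.mem_sup_right hs', h⟩
      | one => intro r hr; exact ⟨1, one_mem _, by simpa using hr⟩
      | mul x y hx hy ihx ihy =>
        intro r hr
        obtain ⟨s', hs', h⟩ := ihy (r * x) (by rw [← mul_assoc] at hr; exact hr)
        obtain ⟨s'', hs'', h'⟩ := ihx (s' * r) (by rw [mul_assoc]; exact h)
        exact ⟨s'' * s', mul_mem hs'' hs', by rw [mul_assoc]; exact h'⟩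
    intro r s hs hr
    rw [hsup] at hs
    exact key s hs r hr
end

section
/- In the localization O(SL_q(2))[d⁻¹], the assignment γ_d(λ) = a − b d⁻¹ c, γ_d(ξ) = c, γ_d(λ⁻¹) = d extends uniquely to an algebra homomorphism γ_d : B → O(SL_q(2))[d⁻¹] from the lower Borel quotient Hopf algebra B = O(SL_q(2))/(b), and γ_d is a morphism of right B-comodule algebras (where B coacts on itself by Δ_B and on the localization by the extension of (id ⊗ π)Δ). -/
/-!
STATEMENT 15: In the localization `O(SL_q(2))[d⁻¹]`, the assignment
`γ_d(λ) = a − b d⁻¹ c`, `γ_d(ξ) = c`, `γ_d(λ⁻¹) = d` extends uniquely to an algebra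
homomorphism `γ_d : B → O(SL_q(2))[d⁻¹]` from the lower Borel quotient Hopf algebra
`B = O(SL_q(2))/(b)`, and `γ_d` is a morphism of right `B`-comodule algebras (`B` coacting
on itself by `Δ_B` and on the localization by the extension of `(id ⊗ π)Δ`, which sends
`a ↦ a⊗λ + b⊗ξ`, `b ↦ b⊗λ⁻¹`, `c ↦ c⊗λ + d⊗ξ`, `d ↦ d⊗λ⁻¹`, `d⁻¹ ↦ d⁻¹⊗λ`).
-/

open FreeAlgebra TensorProduct

/-- Defining relations of `O(SL_q(2))`; generators `0,1,2,3 ↦ a,b,c,d`. -/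
inductive SLq2Rel (q : ℂ) : FreeAlgebra ℂ (Fin 4) → FreeAlgebra ℂ (Fin 4) → Prop
  | ab : SLq2Rel q (ι ℂ 0 * ι ℂ 1) (q • (ι ℂ 1 * ι ℂ 0))
  | ac : SLq2Rel q (ι ℂ 0 * ι ℂ 2) (q • (ι ℂ 2 * ι ℂ 0))
  | bc : SLq2Rel q (ι ℂ 1 * ι ℂ 2) (ι ℂ 2 * ι ℂ 1)
  | bd : SLq2Rel q (ι ℂ 1 * ι ℂ 3) (q • (ι ℂ 3 * ι ℂ 1))
  | cd : SLq2Rel q (ι ℂ 2 * ι ℂ 3) (q • (ι ℂ 3 * ι ℂ 2))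
  | adda : SLq2Rel q (ι ℂ 0 * ι ℂ 3 - ι ℂ 3 * ι ℂ 0) ((q - q⁻¹) • (ι ℂ 1 * ι ℂ 2))
  | det : SLq2Rel q (ι ℂ 0 * ι ℂ 3 - q • (ι ℂ 1 * ι ℂ 2)) 1

abbrev SLq2 (q : ℂ) : Type := RingQuot (SLq2Rel q)

noncomputable def aQ (q : ℂ) : SLq2 q := RingQuot.mkAlgHom ℂ (SLq2Rel q) (ι ℂ 0)
noncomputable def bQ (q : ℂ) : SLq2 q := RingQuot.mkAlgHom ℂ (SLq2Rel q) (ι ℂ 1)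
noncomputable def cQ (q : ℂ) : SLq2 q := RingQuot.mkAlgHom ℂ (SLq2Rel q) (ι ℂ 2)
noncomputable def dQ (q : ℂ) : SLq2 q := RingQuot.mkAlgHom ℂ (SLq2Rel q) (ι ℂ 3)

/-- Relations of the lower Borel quotient `B = O(SL_q(2))/(b)`: the relations of
`O(SL_q(2))` together with `b = 0`. -/
inductive BorelRel (q : ℂ) : FreeAlgebra ℂ (Fin 4) → FreeAlgebra ℂ (Fin 4) → Prop
  | slq2 {x y} : SLq2Rel q x y → BorelRel q x y
  | bzero : BorelRel q (ι ℂ 1) 0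

abbrev BorelQ (q : ℂ) : Type := RingQuot (BorelRel q)

/-- `λ = π(a)`. -/
noncomputable def lamB (q : ℂ) : BorelQ q := RingQuot.mkAlgHom ℂ (BorelRel q) (ι ℂ 0)
/-- `ξ = π(c)`. -/
noncomputable def xiB (q : ℂ) : BorelQ q := RingQuot.mkAlgHom ℂ (BorelRel q) (ι ℂ 2)
/-- `λ⁻¹ = π(d)`. -/
noncomputable def lamBinv (q : ℂ) : BorelQ q := RingQuot.mkAlgHom ℂ (BorelRel q) (ι ℂ 3)

lemma bB_zero (q : ℂ) : RingQuot.mkAlgHom ℂ (BorelRel q) (ι ℂ 1) = 0 := by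
  simpa using RingQuot.mkAlgHom_rel ℂ (BorelRel.bzero (q := q))

lemma lam_mul_lamBinv (q : ℂ) : lamB q * lamBinv q = 1 := by
  have h := RingQuot.mkAlgHom_rel ℂ (BorelRel.slq2 (SLq2Rel.det (q := q)))
  simp only [map_sub, map_smul, map_mul, map_one, bB_zero, zero_mul, smul_zero, sub_zero] at h
  exact h

lemma lamBinv_mul_lam (q : ℂ) : lamBinv q * lamB q = 1 := by
  have h := RingQuot.mkAlgHom_rel ℂ (BorelRel.slq2 (SLq2Rel.adda (q := q)))
  simp only [map_sub, map_smul, map_mul, bB_zero, zero_mul, smul_zero, sub_eq_zero] at h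
  rw [show lamBinv q * lamB q = RingQuot.mkAlgHom ℂ (BorelRel q) (ι ℂ 3) *
      RingQuot.mkAlgHom ℂ (BorelRel q) (ι ℂ 0) from rfl, ← h]
  exact lam_mul_lamBinv q

theorem gamma_d_exists_unique_and_comodule_map
    (q : ℂ) (hq : q ≠ 0)
    -- the Ore localization O(SL_q(2))[d⁻¹], presented by its defining data
    {L : Type} [Ring L] [Algebra ℂ L]
    (ιd : SLq2 q →ₐ[ℂ] L) (dinv : L)
    (hd1 : ιd (dQ q) * dinv = 1) (hd2 : dinv * ιd (dQ q) = 1)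
    -- the comultiplication of the Borel quotient Hopf algebra B
    (ΔB : BorelQ q →ₐ[ℂ] BorelQ q ⊗[ℂ] BorelQ q)
    (hΔlam : ΔB (lamB q) = lamB q ⊗ₜ[ℂ] lamB q)
    (hΔxi : ΔB (xiB q) = xiB q ⊗ₜ[ℂ] lamB q + lamBinv q ⊗ₜ[ℂ] xiB q)
    (hΔlaminv : ΔB (lamBinv q) = lamBinv q ⊗ₜ[ℂ] lamBinv q)
    -- the right B-coaction on the localization, extending (id ⊗ π)Δ
    (ρL : L →ₐ[ℂ] L ⊗[ℂ] BorelQ q)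
    (hρa : ρL (ιd (aQ q)) = ιd (aQ q) ⊗ₜ[ℂ] lamB q + ιd (bQ q) ⊗ₜ[ℂ] xiB q)
    (hρb : ρL (ιd (bQ q)) = ιd (bQ q) ⊗ₜ[ℂ] lamBinv q)
    (hρc : ρL (ιd (cQ q)) = ιd (cQ q) ⊗ₜ[ℂ] lamB q + ιd (dQ q) ⊗ₜ[ℂ] xiB q)
    (hρd : ρL (ιd (dQ q)) = ιd (dQ q) ⊗ₜ[ℂ] lamBinv q)
    (hρdinv : ρL dinv = dinv ⊗ₜ[ℂ] lamB q) :
    ∃! γ : BorelQ q →ₐ[ℂ] L,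
      (γ (lamB q) = ιd (aQ q) - ιd (bQ q) * dinv * ιd (cQ q) ∧
       γ (xiB q) = ιd (cQ q) ∧
       γ (lamBinv q) = ιd (dQ q)) ∧
      ρL.toLinearMap ∘ₗ γ.toLinearMap
        = (TensorProduct.map γ.toLinearMap LinearMap.id) ∘ₗ ΔB.toLinearMap := by
  classical
  -- relations in L coming from the relations of O(SL_q(2))
  have key : ∀ {x y}, SLq2Rel q x y →
      ιd (RingQuot.mkAlgHom ℂ (SLq2Rel q) x) = ιd (RingQuot.mkAlgHom ℂ (SLq2Rel q) y) :=
    fun h => congrArg ιd (RingQuot.mkAlgHom_rel ℂ h)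
  have hAC : ιd (aQ q) * ιd (cQ q) = q • (ιd (cQ q) * ιd (aQ q)) := by
    have h := key SLq2Rel.ac; simp only [map_mul, map_smul] at h
    simpa only [aQ, cQ] using h
  have hBC : ιd (bQ q) * ιd (cQ q) = ιd (cQ q) * ιd (bQ q) := by
    have h := key SLq2Rel.bc; simp only [map_mul] at h
    simpa only [bQ, cQ] using h
  have hBD : ιd (bQ q) * ιd (dQ q) = q • (ιd (dQ q) * ιd (bQ q)) := by
    have h := key SLq2Rel.bd; simp only [map_mul, map_smul] at h
    simpa only [bQ, dQ] using h
  have hCD : ιd (cQ q) * ιd (dQ q) = q • (ιd (dQ q) * ιd (cQ q)) := by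
    have h := key SLq2Rel.cd; simp only [map_mul, map_smul] at h
    simpa only [cQ, dQ] using h
  have hADDA : ιd (aQ q) * ιd (dQ q) - ιd (dQ q) * ιd (aQ q)
      = (q - q⁻¹) • (ιd (bQ q) * ιd (cQ q)) := by
    have h := key SLq2Rel.adda; simp only [map_sub, map_mul, map_smul] at h
    simpa only [aQ, bQ, cQ, dQ] using h
  have hdet : ιd (aQ q) * ιd (dQ q) - q • (ιd (bQ q) * ιd (cQ q)) = 1 := by
    have h := key SLq2Rel.det; simp only [map_sub, map_mul, map_smul, map_one] at h
    simpa only [aQ, bQ, cQ, dQ] using h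
  set A := ιd (aQ q) with hAdef
  set B := ιd (bQ q) with hBdef
  set C := ιd (cQ q) with hCdef
  set D := ιd (dQ q) with hDdef
  -- derived commutation relations
  have hDB : D * B = q⁻¹ • (B * D) := by rw [hBD, smul_smul, inv_mul_cancel₀ hq, one_smul]
  have hdinvC : dinv * C = q • (C * dinv) := by
    calc dinv * C = dinv * C * (D * dinv) := by rw [hd1, mul_one]
      _ = dinv * (C * D) * dinv := by noncomm_ring
      _ = dinv * (q • (D * C)) * dinv := by rw [hCD]
      _ = q • (dinv * D * (C * dinv)) := by
          rw [mul_smul_comm, smul_mul_assoc]; congr 1; noncomm_ring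
      _ = q • (C * dinv) := by rw [hd2, one_mul]
  have hCdinv : C * dinv = q⁻¹ • (dinv * C) := by
    rw [hdinvC, smul_smul, inv_mul_cancel₀ hq, one_smul]
  -- main computations in L
  have hαD : (A - B * dinv * C) * D = 1 := by
    have h1 : B * dinv * C * D = q • (B * C) := by
      calc B * dinv * C * D = B * dinv * (C * D) := by noncomm_ring
        _ = B * dinv * (q • (D * C)) := by rw [hCD]
        _ = q • (B * (dinv * D) * C) := by rw [mul_smul_comm]; congr 1; noncomm_ring
        _ = q • (B * C) := by rw [hd2, mul_one]
    rw [sub_mul, h1]; exact hdet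
  have hDα : D * (A - B * dinv * C) = 1 := by
    have h1 : D * (B * dinv * C) = q⁻¹ • (B * C) := by
      calc D * (B * dinv * C) = D * B * dinv * C := by noncomm_ring
        _ = (q⁻¹ • (B * D)) * dinv * C := by rw [hDB]
        _ = q⁻¹ • (B * (D * dinv) * C) := by
            rw [smul_mul_assoc, smul_mul_assoc]; congr 1; noncomm_ring
        _ = q⁻¹ • (B * C) := by rw [hd1, mul_one]
    have hDA : D * A = A * D - (q - q⁻¹) • (B * C) := by rw [← hADDA]; abel
    rw [mul_sub, h1, hDA, sub_sub, ← add_smul, sub_add_cancel]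
    exact hdet
  have hαC : (A - B * dinv * C) * C = q • (C * (A - B * dinv * C)) := by
    have h2 : C * (B * dinv * C) = q⁻¹ • (B * dinv * C * C) := by
      calc C * (B * dinv * C) = C * B * (dinv * C) := by noncomm_ring
        _ = B * C * (dinv * C) := by rw [← hBC]
        _ = B * (C * dinv) * C := by noncomm_ring
        _ = B * (q⁻¹ • (dinv * C)) * C := by rw [hCdinv]
        _ = q⁻¹ • (B * dinv * C * C) := by
            rw [mul_smul_comm, smul_mul_assoc]; congr 1; noncomm_ring
    rw [sub_mul, mul_sub, smul_sub, hAC, h2, smul_smul, mul_inv_cancel₀ hq, one_smul]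
  -- the algebra map from the free algebra
  set gen : Fin 4 → L := ![A - B * dinv * C, 0, C, D] with hgen
  set f : FreeAlgebra ℂ (Fin 4) →ₐ[ℂ] L := FreeAlgebra.lift ℂ gen with hf
  have hf0 : f (ι ℂ 0) = A - B * dinv * C := by simp [hf, hgen]
  have hf1 : f (ι ℂ 1) = 0 := by simp [hf, hgen]
  have hf2 : f (ι ℂ 2) = C := by simp [hf, hgen]
  have hf3 : f (ι ℂ 3) = D := by simp [hf, hgen]
  have hrel : ∀ ⦃x y⦄, BorelRel q x y → f x = f y := by
    intro x y h
    cases h with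
    | bzero => simp [hf1]
    | slq2 h =>
      cases h with
      | ab => simp [map_mul, map_smul, hf0, hf1]
      | ac => rw [map_mul, map_smul, map_mul, hf0, hf2]; exact hαC
      | bc => simp [map_mul, hf1, hf2]
      | bd => simp [map_mul, map_smul, hf1, hf3]
      | cd => rw [map_mul, map_smul, map_mul, hf2, hf3]; exact hCD
      | adda =>
        rw [map_sub, map_mul, map_mul, map_smul, map_mul, hf0, hf1, hf3]
        simp [hαD, hDα]
      | det =>
        rw [map_sub, map_mul, map_smul, map_mul, map_one, hf0, hf1, hf3]
        simp [hαD]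
  set γ : BorelQ q →ₐ[ℂ] L := RingQuot.liftAlgHom ℂ ⟨f, hrel⟩ with hγ
  have hγ0 : γ (lamB q) = A - B * dinv * C := by
    rw [hγ, lamB, RingQuot.liftAlgHom_mkAlgHom_apply]; exact hf0
  have hγ2 : γ (xiB q) = C := by
    rw [hγ, xiB, RingQuot.liftAlgHom_mkAlgHom_apply]; exact hf2
  have hγ3 : γ (lamBinv q) = D := by
    rw [hγ, lamBinv, RingQuot.liftAlgHom_mkAlgHom_apply]; exact hf3
  -- toLinearMap of Algebra.TensorProduct.map
  have hmapl : ∀ (δ : BorelQ q →ₐ[ℂ] L),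
      (Algebra.TensorProduct.map δ (AlgHom.id ℂ (BorelQ q))).toLinearMap
        = TensorProduct.map δ.toLinearMap LinearMap.id := by
    intro δ; apply TensorProduct.ext'; intro x y; simp
  -- the comodule-map property as an AlgHom equation
  have hll : lamB q * lamBinv q = 1 := lam_mul_lamBinv q
  have hll' : lamBinv q * lamB q = 1 := lamBinv_mul_lam q
  have hBdD : B * dinv * D = B := by rw [mul_assoc, hd2, mul_one]
  have hcomod : ρL.comp γ = (Algebra.TensorProduct.map γ (AlgHom.id ℂ (BorelQ q))).comp ΔB := by
    apply RingQuot.ringQuot_ext'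
    apply FreeAlgebra.hom_ext
    funext i
    fin_cases i
    · show ρL (γ (lamB q)) = Algebra.TensorProduct.map γ (AlgHom.id ℂ (BorelQ q)) (ΔB (lamB q))
      rw [hγ0, hΔlam, map_sub, map_mul, map_mul, hρa, hρb, hρc, hρdinv,
        Algebra.TensorProduct.map_tmul, hγ0]
      rw [Algebra.TensorProduct.tmul_mul_tmul, hll', mul_add,
        Algebra.TensorProduct.tmul_mul_tmul, Algebra.TensorProduct.tmul_mul_tmul,
        one_mul, one_mul, hBdD, sub_tmul]
      simp only [AlgHom.coe_id, id_eq]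
      abel
    · show ρL (γ (RingQuot.mkAlgHom ℂ (BorelRel q) (ι ℂ 1)))
        = Algebra.TensorProduct.map γ (AlgHom.id ℂ (BorelQ q)) (ΔB (RingQuot.mkAlgHom ℂ (BorelRel q) (ι ℂ 1)))
      rw [bB_zero]; simp
    · show ρL (γ (xiB q)) = Algebra.TensorProduct.map γ (AlgHom.id ℂ (BorelQ q)) (ΔB (xiB q))
      rw [hγ2, hρc, hΔxi, map_add, Algebra.TensorProduct.map_tmul,
        Algebra.TensorProduct.map_tmul, hγ2, hγ3]
      simp
    · show ρL (γ (lamBinv q)) = Algebra.TensorProduct.map γ (AlgHom.id ℂ (BorelQ q)) (ΔB (lamBinv q))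
      rw [hγ3, hρd, hΔlaminv, Algebra.TensorProduct.map_tmul, hγ3]
      simp
  refine ⟨γ, ⟨⟨hγ0, hγ2, hγ3⟩, ?_⟩, ?_⟩
  · have := congrArg AlgHom.toLinearMap hcomod
    rwa [AlgHom.comp_toLinearMap, AlgHom.comp_toLinearMap, hmapl] at this
  · rintro γ' ⟨⟨h1, h2, h3⟩, -⟩
    apply RingQuot.ringQuot_ext'
    apply FreeAlgebra.hom_ext
    funext i
    fin_cases i
    · show γ' (lamB q) = γ (lamB q)
      rw [h1, hγ0]
    · show γ' (RingQuot.mkAlgHom ℂ (BorelRel q) (ι ℂ 1)) = γ (RingQuot.mkAlgHom ℂ (BorelRel q) (ι ℂ 1))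
      rw [bB_zero, map_zero, map_zero]
    · show γ' (xiB q) = γ (xiB q)
      rw [h2, hγ2]
    · show γ' (lamBinv q) = γ (lamBinv q)
      rw [h3, hγ3]
end
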